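/- arXiv:1806.02195 — 2 statements merged into one kernel-verified Lean document; each statement's English description precedes it below -/
import Mathlib

section
/- In the unique-circuit essential setting, there exist signs c_0, …, c_k ∈ {1, −1} such that ∑_{i=0}^{k} c_i · (1/a_i) · χ_i = 0 in ℚ^n. -/
noncomputable section

/-- Coordinatewise inclusion of `ℤ^d` into `ℚ^d`. -/
def intCastHom (d : ℕ) : (Fin d → ℤ) →+ (Fin d → ℚ) :=
  (Int.castAddHom ℚ).compLeft (Fin d)

/-- The rational vector associated to an integer vector. -/
def Qv (d : ℕ) (v : Fin d → ℤ) : Fin d → ℚ := fun j => (v j : ℚ)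

/-- The subgroup `Λ_A` of `ℤ^d` generated by the vectors `χ i`, `i ∈ A`. -/
def latSub (d : ℕ) (χ : ℕ → Fin d → ℤ) (A : Finset ℕ) : AddSubgroup (Fin d → ℤ) :=
  AddSubgroup.closure ((fun i => χ i) '' (A : Set ℕ))

/-- The saturation `Λ^A = (ℚ-span of {χ i : i ∈ A}) ∩ ℤ^d`. -/
def satSub (d : ℕ) (χ : ℕ → Fin d → ℤ) (A : Finset ℕ) : AddSubgroup (Fin d → ℤ) :=
  ((Submodule.span ℚ ((fun i => Qv d (χ i)) '' (A : Set ℕ))).toAddSubgroup).comap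
    (intCastHom d)

/-- The multiplicity `m(A) = [Λ^A : Λ_A]`. -/
def mult (d : ℕ) (χ : ℕ → Fin d → ℤ) (A : Finset ℕ) : ℕ :=
  (latSub d χ A).relIndex (satSub d χ A)

/-- The coefficients `a_i`: `a_i = m(E) ∏_{j ∈ C, j≠i} m(C∖{j})` for `i ∈ C = {0,…,k}`,
and `a_i = m(E)` for `k < i ≤ n`, where `E = {0,…,n}`. -/
def aCoef (n k : ℕ) (χ : ℕ → Fin n → ℤ) (i : ℕ) : ℕ :=
  if i ≤ k then
    mult n χ (Finset.range (n+1)) *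
      ∏ j ∈ (Finset.range (k+1)).erase i, mult n χ ((Finset.range (k+1)).erase j)
  else mult n χ (Finset.range (n+1))

/-- The lattice `Λ(E) ⊆ ℚ^n` generated by the vectors `χ_i / a_i`, `i ∈ E = {0,…,n}`. -/
def LamE (n k : ℕ) (χ : ℕ → Fin n → ℤ) : Submodule ℤ (Fin n → ℚ) :=
  Submodule.span ℤ
    ((fun i => ((aCoef n k χ i : ℚ))⁻¹ • Qv n (χ i)) '' ((Finset.range (n+1) : Finset ℕ) : Set ℕ))

/-- The standard lattice `ℤ^n` viewed as an additive subgroup of `ℚ^n`. -/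
def intLat (n : ℕ) : AddSubgroup (Fin n → ℚ) := (intCastHom n).range

/-! ### Auxiliary lemmas -/

lemma intCastHom_apply (d : ℕ) (v : Fin d → ℤ) : intCastHom d v = Qv d v := rfl

lemma Qv_injective (d : ℕ) : Function.Injective (Qv d) := by
  intro v w h
  funext x
  have := congrFun h x
  simp only [Qv] at this
  exact_mod_cast this

lemma Qv_sum (d : ℕ) (s : Finset ℕ) (c : ℕ → ℤ) (χ : ℕ → Fin d → ℤ) :
    Qv d (∑ j ∈ s, c j • χ j) = ∑ j ∈ s, (c j : ℚ) • Qv d (χ j) := by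
  funext x
  simp only [Qv, Finset.sum_apply, Pi.smul_apply, smul_eq_mul]
  push_cast
  rfl

lemma mem_latSub (d : ℕ) (χ : ℕ → Fin d → ℤ) {A : Finset ℕ} {l : ℕ} (hl : l ∈ A) :
    χ l ∈ latSub d χ A :=
  AddSubgroup.subset_closure ⟨l, by exact_mod_cast hl, rfl⟩

lemma latSub_mono (d : ℕ) (χ : ℕ → Fin d → ℤ) {A B : Finset ℕ} (h : A ⊆ B) :
    latSub d χ A ≤ latSub d χ B :=
  AddSubgroup.closure_mono (Set.image_mono (by exact_mod_cast h))

lemma latSub_le_satSub (d : ℕ) (χ : ℕ → Fin d → ℤ) (A : Finset ℕ) :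
    latSub d χ A ≤ satSub d χ A := by
  rw [latSub, AddSubgroup.closure_le]
  rintro _ ⟨l, hl, rfl⟩
  show χ l ∈ satSub d χ A
  rw [satSub, AddSubgroup.mem_comap, intCastHom_apply]
  exact (Submodule.mem_toAddSubgroup _).mpr (Submodule.subset_span ⟨l, hl, rfl⟩)

lemma latSub_elim (d : ℕ) (χ : ℕ → Fin d → ℤ) {A : Finset ℕ} {x : Fin d → ℤ}
    (hx : x ∈ latSub d χ A) :
    ∃ f : ℕ →₀ ℤ, ∑ l ∈ A, f l • χ l = x := by
  rw [latSub, ← Submodule.span_int_eq_addSubgroupClosure, Submodule.mem_toAddSubgroup,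
    Finsupp.mem_span_image_iff_linearCombination] at hx
  obtain ⟨f, hf, hsum⟩ := hx
  refine ⟨f, ?_⟩
  rw [← hsum, Finsupp.linearCombination_apply]
  have hsupp : f.support ⊆ A := by exact_mod_cast (Finsupp.mem_supported ℤ f).mp hf
  exact (Finsupp.sum_of_support_subset (s := A) f hsupp (fun i a => a • χ i) (fun i _ => zero_smul ℤ (χ i))).symm

section Main

variable (n k : ℕ) (χ : ℕ → Fin n → ℤ)

/-- If a linear relation over `C = {0,…,k}` has a vanishing coefficient, it is trivial. -/
lemma aux_vanish
    (hind : ∀ i ∈ Finset.range (k+1),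
      LinearIndependent ℚ
        (fun a : (((Finset.range (k+1)).erase i : Finset ℕ) : Finset ℕ) => Qv n (χ a)))
    (β : ℕ → ℚ) (hrel : ∑ l ∈ Finset.range (k+1), β l • Qv n (χ l) = 0)
    {i : ℕ} (hi : i ∈ Finset.range (k+1)) (hβi : β i = 0) :
    ∀ l ∈ Finset.range (k+1), β l = 0 := by
  have h := Fintype.linearIndependent_iff.mp (hind i hi) (fun a => β a) ?_
  · intro l hl
    rcases eq_or_ne l i with rfl | hne
    · exact hβi
    · exact h ⟨l, Finset.mem_erase.mpr ⟨hne, hl⟩⟩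
  · rw [Finset.sum_coe_sort ((Finset.range (k+1)).erase i) (fun l => β l • Qv n (χ l))]
    rw [← Finset.add_sum_erase _ _ hi, hβi, zero_smul, zero_add] at hrel
    exact hrel

/-- Any relation is proportional to a fixed relation with nonzero `i`-coefficient. -/
lemma aux_prop
    (hind : ∀ i ∈ Finset.range (k+1),
      LinearIndependent ℚ
        (fun a : (((Finset.range (k+1)).erase i : Finset ℕ) : Finset ℕ) => Qv n (χ a)))
    (lam β : ℕ → ℚ)
    (hlam : ∑ l ∈ Finset.range (k+1), lam l • Qv n (χ l) = 0)
    (hβ : ∑ l ∈ Finset.range (k+1), β l • Qv n (χ l) = 0)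
    {i : ℕ} (hi : i ∈ Finset.range (k+1)) (hlami : lam i ≠ 0) :
    ∀ l ∈ Finset.range (k+1), β l = (β i / lam i) * lam l := by
  have key := aux_vanish n k χ hind (fun l => β l - (β i / lam i) * lam l) ?_ hi ?_
  · intro l hl
    have := key l hl
    linarith
  · rw [show (fun l => (β l - (β i / lam i) * lam l) • Qv n (χ l)) = fun l =>
      β l • Qv n (χ l) - (β i / lam i) • (lam l • Qv n (χ l)) from ?_]
    · rw [Finset.sum_sub_distrib, hβ, ← Finset.smul_sum, hlam, smul_zero, sub_zero]
    · funext l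
      rw [sub_smul, smul_smul]
  · field_simp; ring

/-- Existence of a primitive integer relation on the circuit. -/
lemma aux_primrel
    (hdep : ¬ LinearIndependent ℚ
      (fun i : (Finset.range (k+1) : Finset ℕ) => Qv n (χ i)))
    (hind : ∀ i ∈ Finset.range (k+1),
      LinearIndependent ℚ
        (fun a : (((Finset.range (k+1)).erase i : Finset ℕ) : Finset ℕ) => Qv n (χ a))) :
    ∃ lam : ℕ → ℤ, (∀ l ∈ Finset.range (k+1), lam l ≠ 0) ∧
      (Finset.range (k+1)).gcd (fun l => (lam l).natAbs) = 1 ∧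
      ∑ l ∈ Finset.range (k+1), (lam l : ℚ) • Qv n (χ l) = 0 := by
  classical
  set C := Finset.range (k+1) with hC
  obtain ⟨g0, hg0sum, i0, hi0⟩ := Fintype.not_linearIndependent_iff.mp hdep
  set g : ℕ → ℚ := fun l => if h : l ∈ C then g0 ⟨l, h⟩ else 0 with hg
  have hgsum : ∑ l ∈ C, g l • Qv n (χ l) = 0 := by
    rw [← Finset.sum_coe_sort C (fun l => g l • Qv n (χ l))]
    rw [← hg0sum]
    apply Finset.sum_congr rfl
    intro a _
    simp [hg, a.2]
  have hgne : ∀ l ∈ C, g l ≠ 0 := by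
    intro l hl hzero
    have hall := aux_vanish n k χ hind g hgsum hl hzero
    exact hi0 (by simpa [hg, Subtype.coe_eta] using hall i0 i0.2)
  -- clear denominators
  set lam' : ℕ → ℤ := fun l => (g l).num * ∏ m ∈ C.erase l, ((g m).den : ℤ) with hlam'
  have hlam'cast : ∀ l ∈ C, (lam' l : ℚ) = (∏ m ∈ C, ((g m).den : ℚ)) * g l := by
    intro l hl
    rw [← Finset.mul_prod_erase C (fun m => ((g m).den : ℚ)) hl]
    have h1 : ((g l).den : ℚ) * g l = (g l).num := by
      rw [mul_comm]; exact Rat.mul_den_eq_num _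
    push_cast [hlam']
    rw [mul_assoc, mul_comm ((∏ m ∈ C.erase l, ((g m).den : ℚ))) (g l),
      ← mul_assoc, h1]
  have hlam'ne : ∀ l ∈ C, lam' l ≠ 0 := by
    intro l hl
    apply mul_ne_zero
    · exact Rat.num_ne_zero.mpr (hgne l hl)
    · exact Finset.prod_ne_zero_iff.mpr (fun m _ => by exact_mod_cast (g m).den_nz)
  have hlam'rel : ∑ l ∈ C, (lam' l : ℚ) • Qv n (χ l) = 0 := by
    calc ∑ l ∈ C, (lam' l : ℚ) • Qv n (χ l)
        = ∑ l ∈ C, (∏ m ∈ C, ((g m).den : ℚ)) • (g l • Qv n (χ l)) := by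
          apply Finset.sum_congr rfl
          intro l hl
          rw [smul_smul, hlam'cast l hl]
      _ = (∏ m ∈ C, ((g m).den : ℚ)) • ∑ l ∈ C, g l • Qv n (χ l) := by
          rw [Finset.smul_sum]
      _ = 0 := by rw [hgsum, smul_zero]
  -- divide by the gcd
  set d : ℕ := C.gcd (fun l => (lam' l).natAbs) with hd
  have h0C : (0 : ℕ) ∈ C := by simp [hC]
  have hdne : d ≠ 0 := by
    intro h
    exact hlam'ne 0 h0C (Int.natAbs_eq_zero.mp (Finset.gcd_eq_zero_iff.mp h 0 h0C))
  have hdvd : ∀ l ∈ C, (d : ℤ) ∣ lam' l := by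
    intro l hl
    exact Int.dvd_natAbs.mp (Int.natCast_dvd_natCast.mpr (Finset.gcd_dvd hl))
  refine ⟨fun l => lam' l / d, ?_, ?_, ?_⟩
  · intro l hl h
    have h' : lam' l / (d : ℤ) = 0 := h
    have := Int.ediv_mul_cancel (hdvd l hl)
    rw [h', zero_mul] at this
    exact hlam'ne l hl this.symm
  · have := Finset.gcd_div_eq_one (f := fun l => (lam' l).natAbs) h0C
      (Int.natAbs_ne_zero.mpr (hlam'ne 0 h0C))
    rw [← this]
    apply Finset.gcd_congr rfl
    intro l hl
    rw [Int.natAbs_ediv_of_dvd (hdvd l hl)]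
    simp [hd]
  · have : ∀ l ∈ C, ((lam' l / d : ℤ) : ℚ) = (d : ℚ)⁻¹ * (lam' l : ℚ) := by
      intro l hl
      obtain ⟨u, hu⟩ := hdvd l hl
      rw [hu, Int.mul_ediv_cancel_left _ (by exact_mod_cast hdne)]
      push_cast
      rw [← mul_assoc, inv_mul_cancel₀ (by exact_mod_cast hdne), one_mul]
    calc ∑ l ∈ C, ((lam' l / d : ℤ) : ℚ) • Qv n (χ l)
        = ∑ l ∈ C, (d : ℚ)⁻¹ • ((lam' l : ℚ) • Qv n (χ l)) := by
          apply Finset.sum_congr rfl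
          intro l hl
          rw [smul_smul, this l hl]
      _ = (d : ℚ)⁻¹ • ∑ l ∈ C, (lam' l : ℚ) • Qv n (χ l) := by rw [Finset.smul_sum]
      _ = 0 := by rw [hlam'rel, smul_zero]

/-- If `s * z` is an integer then the denominator of `s` divides `z`. -/
lemma den_dvd_of_mul_int (s : ℚ) (z w : ℤ) (h : s * (z : ℚ) = (w : ℚ)) :
    (s.den : ℤ) ∣ z := by
  have h1 : (s.num : ℚ) * z = (w : ℚ) * s.den := by
    have h2 : s * s.den = s.num := Rat.mul_den_eq_num s
    calc (s.num : ℚ) * z = (s * s.den) * z := by rw [h2]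
      _ = (s * z) * s.den := by ring
      _ = (w : ℚ) * s.den := by rw [h]
  have h3 : s.num * z = w * s.den := by exact_mod_cast h1
  have h4 : (s.den : ℤ) ∣ s.num * z := ⟨w, by rw [h3]; ring⟩
  have h5 : s.den ∣ s.num.natAbs * z.natAbs := by
    rw [← Int.natAbs_mul]
    have := Int.natAbs_dvd_natAbs.mpr h4
    simpa using this
  have h6 : Nat.Coprime s.den s.num.natAbs := (Rat.reduced s).symm
  have h7 : s.den ∣ z.natAbs := (Nat.Coprime.dvd_of_dvd_mul_left h6 h5)
  exact Int.dvd_natAbs.mp (Int.natCast_dvd_natCast.mpr h7)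

end Main

section Main2

variable (n k : ℕ) (χ : ℕ → Fin n → ℤ)

lemma satSub_erase_eq
    (lam : ℕ → ℤ)
    (hrel : ∑ l ∈ Finset.range (k+1), (lam l : ℚ) • Qv n (χ l) = 0)
    {i : ℕ} (hi : i ∈ Finset.range (k+1)) (hlami : lam i ≠ 0) :
    satSub n χ ((Finset.range (k+1)).erase i) = satSub n χ (Finset.range (k+1)) := by
  have hspan : Submodule.span ℚ
        ((fun l => Qv n (χ l)) '' (((Finset.range (k+1)).erase i : Finset ℕ) : Set ℕ))
      = Submodule.span ℚ ((fun l => Qv n (χ l)) '' ((Finset.range (k+1) : Finset ℕ) : Set ℕ)) := by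
    apply le_antisymm
    · exact Submodule.span_mono (Set.image_mono (by exact_mod_cast Finset.erase_subset i _))
    · rw [Submodule.span_le]
      rintro _ ⟨l, hl, rfl⟩
      have hl' : l ∈ Finset.range (k+1) := by exact_mod_cast hl
      by_cases hli : l = i
      · subst hli
        have h1 : (lam l : ℚ) • Qv n (χ l)
            = - ∑ m ∈ (Finset.range (k+1)).erase l, (lam m : ℚ) • Qv n (χ m) := by
          rw [← Finset.add_sum_erase _ _ hl'] at hrel
          exact eq_neg_of_add_eq_zero_left hrel
        have hS : ∑ m ∈ (Finset.range (k+1)).erase l, (lam m : ℚ) • Qv n (χ m) ∈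
            Submodule.span ℚ
              ((fun l => Qv n (χ l)) ''
                (((Finset.range (k+1)).erase l : Finset ℕ) : Set ℕ)) :=
          Submodule.sum_smul_mem _ _ (fun m hm => Submodule.subset_span ⟨m, by exact_mod_cast hm, rfl⟩)
        have h2 : (lam l : ℚ) • Qv n (χ l) ∈ Submodule.span ℚ
            ((fun l => Qv n (χ l)) '' (((Finset.range (k+1)).erase l : Finset ℕ) : Set ℕ)) := by
          rw [h1]; exact neg_mem hS
        have h3 := Submodule.smul_mem _ ((lam l : ℚ))⁻¹ h2
        rw [smul_smul, inv_mul_cancel₀ (by exact_mod_cast hlami), one_smul] at h3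
        exact SetLike.mem_coe.mpr h3
      · exact Submodule.subset_span ⟨l, by exact_mod_cast Finset.mem_erase.mpr ⟨hli, hl'⟩, rfl⟩
  rw [satSub, satSub, hspan]

lemma aux_order
    (hind : ∀ i ∈ Finset.range (k+1),
      LinearIndependent ℚ
        (fun a : (((Finset.range (k+1)).erase i : Finset ℕ) : Finset ℕ) => Qv n (χ a)))
    (lam : ℕ → ℤ) (hlamne : ∀ l ∈ Finset.range (k+1), lam l ≠ 0)
    (hgcd : (Finset.range (k+1)).gcd (fun l => (lam l).natAbs) = 1)
    (hrel : ∑ l ∈ Finset.range (k+1), (lam l : ℚ) • Qv n (χ l) = 0)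
    {i : ℕ} (hi : i ∈ Finset.range (k+1)) :
    (latSub n χ ((Finset.range (k+1)).erase i)).relIndex (latSub n χ (Finset.range (k+1)))
      = (lam i).natAbs := by
  classical
  set C := Finset.range (k+1) with hC
  set Li := latSub n χ (C.erase i) with hLi
  set LC := latSub n χ C with hLC
  set H := Li.addSubgroupOf LC with hH
  have hχiC : χ i ∈ LC := mem_latSub n χ hi
  set x : LC := ⟨χ i, hχiC⟩ with hx
  set q : LC ⧸ H := QuotientAddGroup.mk x with hq
  have hintrel : ∑ l ∈ C, lam l • χ l = 0 := by
    apply Qv_injective n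
    rw [Qv_sum]
    rw [hrel]
    funext j
    simp [Qv]
  have hkey : ∀ t : ℤ, t • q = 0 ↔ lam i ∣ t := by
    intro t
    constructor
    · intro ht
      have ht' : ((t • x : LC) : LC ⧸ H) = 0 := by
        rw [QuotientAddGroup.mk_zsmul]; exact ht
      have hmem : (t • x : LC) ∈ H := (QuotientAddGroup.eq_zero_iff _).mp ht'
      have hmem2 : t • χ i ∈ Li := (AddSubgroup.mem_addSubgroupOf).mp hmem
      obtain ⟨f, hf⟩ := latSub_elim n χ hmem2
      set β : ℕ → ℚ := fun l => if l = i then (t : ℚ) else -(f l : ℚ) with hβ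
      have hβrel : ∑ l ∈ C, β l • Qv n (χ l) = 0 := by
        rw [← Finset.add_sum_erase _ _ hi]
        have hs1 : ∑ l ∈ C.erase i, β l • Qv n (χ l)
            = - ∑ l ∈ C.erase i, (f l : ℚ) • Qv n (χ l) := by
          rw [← Finset.sum_neg_distrib]
          apply Finset.sum_congr rfl
          intro l hl
          rw [hβ]
          simp [(Finset.mem_erase.mp hl).1, neg_smul]
        have hs2 : ∑ l ∈ C.erase i, (f l : ℚ) • Qv n (χ l) = (t : ℚ) • Qv n (χ i) := by
          rw [← Qv_sum, hf]
          funext j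
          simp [Qv]
        rw [hs1, hs2]
        simp [hβ]
      have hlami : ((fun l => (lam l : ℚ)) i) ≠ 0 := by
        show (lam i : ℚ) ≠ 0
        exact_mod_cast hlamne i hi
      have hpropor := aux_prop n k χ hind (fun l => (lam l : ℚ)) β hrel hβrel hi hlami
      set s : ℚ := (t : ℚ) / (lam i : ℚ) with hs
      have hβi : β i = (t : ℚ) := by simp [hβ]
      have hsden1 : s.den = 1 := by
        have hdvdall : ∀ l ∈ C, (s.den : ℤ) ∣ lam l := by
          intro l hl
          have hpl := hpropor l hl
          rw [hβi] at hpl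
          rcases eq_or_ne l i with rfl | hne
          · refine den_dvd_of_mul_int s (lam l) t ?_
            rw [hs]
            field_simp
          · refine den_dvd_of_mul_int s (lam l) (-(f l)) ?_
            rw [hs]
            rw [hβ] at hpl
            simp only [hne, if_false] at hpl
            push_cast
            linarith [hpl]
        have hdg : s.den ∣ C.gcd (fun l => (lam l).natAbs) := by
          refine Finset.dvd_gcd ?_
          intro l hl
          have h2 := Int.natAbs_dvd_natAbs.mpr (hdvdall l hl)
          simpa using h2
        rw [hgcd] at hdg
        exact Nat.dvd_one.mp hdg
      have hsint : s = (s.num : ℚ) := by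
        conv_lhs => rw [← Rat.num_div_den s]
        rw [hsden1]
        simp
      have hteq : (t : ℚ) = (s.num : ℚ) * (lam i : ℚ) := by
        rw [← hsint, hs]
        field_simp
      have ht2 : t = s.num * lam i := by exact_mod_cast hteq
      exact ⟨s.num, by rw [ht2]; ring⟩
    · rintro ⟨u, rfl⟩
      have hli : lam i • χ i ∈ Li := by
        have heq : lam i • χ i = - ∑ l ∈ C.erase i, lam l • χ l := by
          rw [← Finset.add_sum_erase _ _ hi] at hintrel
          exact eq_neg_of_add_eq_zero_left hintrel
        rw [heq]
        exact neg_mem (AddSubgroup.sum_mem _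
          (fun l hl => AddSubgroup.zsmul_mem _ (mem_latSub n χ hl) _))
      have hq0 : (lam i) • q = 0 := by
        have : ((lam i • x : LC) : LC ⧸ H) = 0 :=
          (QuotientAddGroup.eq_zero_iff _).mpr ((AddSubgroup.mem_addSubgroupOf).mpr hli)
        rw [QuotientAddGroup.mk_zsmul] at this
        exact this
      rw [mul_comm, mul_zsmul, hq0, smul_zero]
  have hsurj : ∀ y : LC ⧸ H, ∃ t : ℤ, t • q = y := by
    intro y
    induction y using QuotientAddGroup.induction_on with
    | H z =>
      obtain ⟨w, hw⟩ := z
      induction hw using AddSubgroup.closure_induction with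
      | mem v hv =>
        obtain ⟨l, hl, rfl⟩ := hv
        have hl' : l ∈ C := by exact_mod_cast hl
        rcases eq_or_ne l i with rfl | hne
        · exact ⟨1, by rw [one_zsmul]⟩
        · refine ⟨0, ?_⟩
          rw [zero_zsmul]
          exact ((QuotientAddGroup.eq_zero_iff _).mpr
            ((AddSubgroup.mem_addSubgroupOf).mpr
              (mem_latSub n χ (Finset.mem_erase.mpr ⟨hne, hl'⟩)))).symm
      | zero => exact ⟨0, by rw [zero_zsmul]; exact ((QuotientAddGroup.eq_zero_iff _).mpr (zero_mem H)).symm⟩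
      | add a b ha hb iha ihb =>
        obtain ⟨t1, h1⟩ := iha
        obtain ⟨t2, h2⟩ := ihb
        exact ⟨t1 + t2, by rw [add_zsmul, h1, h2]; rfl⟩
      | neg a ha iha =>
        obtain ⟨t1, h1⟩ := iha
        exact ⟨-t1, by rw [neg_zsmul, h1]; rfl⟩
  have htop : AddSubgroup.zmultiples q = ⊤ := by
    rw [AddSubgroup.eq_top_iff']
    intro y
    rw [AddSubgroup.mem_zmultiples_iff]
    exact hsurj y
  have hcard : Nat.card (LC ⧸ H) = addOrderOf q := by
    rw [← Nat.card_zmultiples q, htop]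
    exact (Nat.card_congr AddSubgroup.topEquiv.toEquiv).symm
  have hne : lam i ≠ 0 := hlamne i hi
  have h1 : (lam i).natAbs • q = 0 := by
    have h0 : ((lam i).natAbs : ℤ) • q = 0 := (hkey _).mpr (Int.dvd_natAbs.mpr dvd_rfl)
    simpa using h0
  have h2 : addOrderOf q ∣ (lam i).natAbs := addOrderOf_dvd_of_nsmul_eq_zero h1
  have h3 : (lam i).natAbs ∣ addOrderOf q := by
    have h4 : ((addOrderOf q : ℤ)) • q = 0 := by
      simpa using addOrderOf_nsmul_eq_zero q
    have h5 := (hkey _).mp h4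
    simpa using Int.natAbs_dvd_natAbs.mpr h5
  calc Li.relIndex LC = Nat.card (LC ⧸ H) := rfl
    _ = addOrderOf q := hcard
    _ = (lam i).natAbs := Nat.dvd_antisymm h2 h3

end Main2

/-- Lemma `lem:unimodularity`.
In the unique-circuit essential setting, there exist signs `c_i ∈ {1,−1}` with
`∑_{i=0}^k c_i (1/a_i) χ_i = 0` in `ℚ^n`. -/
theorem stmt_10 (n k : ℕ) (hn : 1 ≤ n) (hk1 : 1 ≤ k) (hkn : k ≤ n)
    (χ : ℕ → Fin n → ℤ)
    (hbasis : LinearIndependent ℚ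
      (fun i : (Finset.Icc 1 n : Finset ℕ) => Qv n (χ i)))
    (hdep : ¬ LinearIndependent ℚ
      (fun i : (Finset.range (k+1) : Finset ℕ) => Qv n (χ i)))
    (hind : ∀ i ∈ Finset.range (k+1),
      LinearIndependent ℚ
        (fun a : (((Finset.range (k+1)).erase i : Finset ℕ) : Finset ℕ) => Qv n (χ a))) :
    ∃ c : ℕ → ℤ, (∀ i ≤ k, c i = 1 ∨ c i = -1) ∧
      ∑ i ∈ Finset.range (k+1),
        (c i : ℚ) • (((aCoef n k χ i : ℚ))⁻¹ • Qv n (χ i)) = 0 := by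
  classical
  obtain ⟨lam, hlamne, hgcd, hrel⟩ := aux_primrel n k χ hdep hind
  set C := Finset.range (k+1) with hC
  set G := mult n χ C with hG
  set mE := mult n χ (Finset.range (n+1)) with hmE
  have hM : ∀ i ∈ C, mult n χ (C.erase i) = (lam i).natAbs * G := by
    intro i hi
    have h1 := satSub_erase_eq n k χ lam hrel hi (hlamne i hi)
    have h2 := aux_order n k χ hind lam hlamne hgcd hrel hi
    have hle1 : latSub n χ (C.erase i) ≤ latSub n χ C :=
      latSub_mono n χ (Finset.erase_subset _ _)
    have hle2 : latSub n χ C ≤ satSub n χ C := latSub_le_satSub n χ C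
    calc mult n χ (C.erase i) = (latSub n χ (C.erase i)).relIndex (satSub n χ C) := by
          rw [mult, h1]
      _ = (latSub n χ (C.erase i)).relIndex (latSub n χ C) *
            (latSub n χ C).relIndex (satSub n χ C) :=
          (AddSubgroup.relIndex_mul_relIndex _ _ _ hle1 hle2).symm
      _ = (lam i).natAbs * G := by rw [h2]; rfl
  have haC : ∀ i ∈ C, aCoef n k χ i = mE * ((∏ j ∈ C.erase i, (lam j).natAbs) * G ^ k) := by
    intro i hi
    have hik : i ≤ k := by
      have := Finset.mem_range.mp hi; omega
    rw [aCoef, if_pos hik]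
    congr 1
    calc ∏ j ∈ C.erase i, mult n χ (C.erase j)
        = ∏ j ∈ C.erase i, (lam j).natAbs * G :=
          Finset.prod_congr rfl (fun j hj => hM j (Finset.mem_of_mem_erase hj))
      _ = (∏ j ∈ C.erase i, (lam j).natAbs) * ∏ _j ∈ C.erase i, G := Finset.prod_mul_distrib
      _ = (∏ j ∈ C.erase i, (lam j).natAbs) * G ^ k := by
          rw [Finset.prod_const, Finset.card_erase_of_mem hi, hC, Finset.card_range]
          simp
  by_cases hdeg : mE = 0 ∨ G = 0
  · refine ⟨fun _ => 1, fun i _ => Or.inl rfl, ?_⟩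
    apply Finset.sum_eq_zero
    intro i hi
    have hzero : aCoef n k χ i = 0 := by
      rw [haC i hi]
      rcases hdeg with h | h
      · rw [h, zero_mul]
      · rw [h]
        have hk0 : k ≠ 0 := by omega
        simp [zero_pow hk0]
    rw [hzero]
    simp
  · push_neg at hdeg
    obtain ⟨hmE0, hG0⟩ := hdeg
    set D : ℕ := mE * ((∏ j ∈ C, (lam j).natAbs) * G ^ k) with hD
    have haCmul : ∀ i ∈ C, aCoef n k χ i * (lam i).natAbs = D := by
      intro i hi
      rw [haC i hi, hD, ← Finset.prod_erase_mul C _ hi]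
      ring
    have hD0 : (D : ℚ) ≠ 0 := by
      have hDnz : D ≠ 0 := by
        rw [hD]
        refine mul_ne_zero hmE0 (mul_ne_zero ?_ (pow_ne_zero _ hG0))
        exact Finset.prod_ne_zero_iff.mpr fun j hj => Int.natAbs_ne_zero.mpr (hlamne j hj)
      exact_mod_cast hDnz
    refine ⟨fun l => Int.sign (lam l), ?_, ?_⟩
    · intro i hik
      have hi : i ∈ C := by rw [hC]; exact Finset.mem_range.mpr (by omega)
      rcases lt_trichotomy (lam i) 0 with h | h | h
      · right; simpa using Int.sign_eq_neg_one_iff_neg.mpr h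
      · exact absurd h (hlamne i hi)
      · left; simpa using Int.sign_eq_one_iff_pos.mpr h
    · have hterm : ∀ i ∈ C, ((Int.sign (lam i) : ℤ) : ℚ) • (((aCoef n k χ i : ℚ))⁻¹ • Qv n (χ i))
          = (D : ℚ)⁻¹ • ((lam i : ℚ) • Qv n (χ i)) := by
        intro i hi
        have h1 : (aCoef n k χ i : ℚ) * ((lam i).natAbs : ℚ) = (D : ℚ) := by
          exact_mod_cast congrArg (Nat.cast : ℕ → ℚ) (haCmul i hi)
        have hA0 : (aCoef n k χ i : ℚ) ≠ 0 := by
          intro h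
          rw [h, zero_mul] at h1
          exact hD0 h1.symm
        have hinv : ((aCoef n k χ i : ℚ))⁻¹ = ((lam i).natAbs : ℚ) / (D : ℚ) := by
          rw [eq_div_iff hD0, ← h1, ← mul_assoc, inv_mul_cancel₀ hA0, one_mul]
        have hsign : ((Int.sign (lam i) : ℤ) : ℚ) * ((lam i).natAbs : ℚ) = (lam i : ℚ) := by
          rw [show ((lam i).natAbs : ℚ) = (((lam i).natAbs : ℤ) : ℚ) from (Int.cast_natCast _).symm,
            ← Int.cast_mul, Int.sign_mul_natAbs]
        rw [hinv, smul_smul, smul_smul]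
        congr 1
        rw [div_eq_mul_inv, ← mul_assoc, hsign, mul_comm]
      calc ∑ i ∈ C, ((Int.sign (lam i) : ℤ) : ℚ) • (((aCoef n k χ i : ℚ))⁻¹ • Qv n (χ i))
            = ∑ i ∈ C, (D : ℚ)⁻¹ • ((lam i : ℚ) • Qv n (χ i)) := Finset.sum_congr rfl hterm
          _ = (D : ℚ)⁻¹ • ∑ i ∈ C, (lam i : ℚ) • Qv n (χ i) := (Finset.smul_sum).symm
          _ = 0 := by rw [hrel, smul_zero]
end
end

section
/- In the unique-circuit essential setting, the lattice Λ(E) contains ℤ^n; that is, every vector of ℤ^n (viewed inside ℚ^n) lies in the additive subgroup of ℚ^n generated by the vectors χ_i/a_i, i ∈ E. -/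
noncomputable section

/-- Every element of the saturation is torsion modulo the lattice. -/
lemma exists_nsmul_mem_latSub (d : ℕ) (χ : ℕ → Fin d → ℤ) (A : Finset ℕ) :
    ∀ x ∈ satSub d χ A, ∃ N : ℕ, N ≠ 0 ∧ N • x ∈ latSub d χ A := by
  intro x hx
  have hx' : Qv d x ∈ Submodule.span ℚ ((fun i => Qv d (χ i)) '' (A : Set ℕ)) := hx
  rw [Finsupp.mem_span_image_iff_linearCombination] at hx'
  obtain ⟨l, hl, hsum⟩ := hx'
  have hl' : l.support ⊆ A := hl
  set N : ℕ := ∏ i ∈ A, (l i).den with hN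
  have hNne : N ≠ 0 := Finset.prod_ne_zero_iff.mpr fun i _ => (l i).den_nz
  refine ⟨N, hNne, ?_⟩
  set c : ℕ → ℤ := fun i => ((N / (l i).den : ℕ) : ℤ) * (l i).num with hc
  have key : ∀ i ∈ A, ((c i : ℚ)) = (N : ℚ) * l i := by
    intro i hi
    have hdvd : (l i).den ∣ N := Finset.dvd_prod_of_mem _ hi
    have h1 : ((N / (l i).den : ℕ) : ℚ) = (N : ℚ) / ((l i).den : ℚ) :=
      Nat.cast_div hdvd (by exact_mod_cast (l i).den_nz)
    have h2 : ((l i).num : ℚ) / ((l i).den : ℚ) = l i := Rat.num_div_den _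
    rw [hc]
    show (((((N / (l i).den : ℕ) : ℤ)) * (l i).num : ℤ) : ℚ) = (N : ℚ) * l i
    rw [Int.cast_mul, Int.cast_natCast, h1, div_mul_eq_mul_div, mul_div_assoc, h2]
  have hsum' : ∑ i ∈ A, l i • Qv d (χ i) = Qv d x := by
    rw [← hsum, Finsupp.linearCombination_apply, Finsupp.sum]
    exact (Finset.sum_subset hl' fun i _ hi => by
      rw [Finsupp.notMem_support_iff.mp hi, zero_smul]).symm
  have heq : Qv d (N • x) = Qv d (∑ i ∈ A, c i • χ i) := by
    rw [← intCastHom_apply, ← intCastHom_apply, map_nsmul, map_sum]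
    rw [intCastHom_apply]
    rw [← Nat.cast_smul_eq_nsmul ℚ, ← hsum', Finset.smul_sum]
    refine Finset.sum_congr rfl fun i hi => ?_
    rw [map_zsmul, intCastHom_apply, smul_smul, ← Int.cast_smul_eq_zsmul ℚ, key i hi]
  have heq' : N • x = ∑ i ∈ A, c i • χ i := Qv_injective d heq
  rw [heq']
  refine sum_mem fun i hi => AddSubgroup.zsmul_mem _ (AddSubgroup.subset_closure ?_) _
  exact ⟨i, hi, rfl⟩

/-- `m(A)` is positive, and `m(A) • x ∈ Λ_A` for every `x ∈ Λ^A`. -/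
lemma mult_spec (d : ℕ) (χ : ℕ → Fin d → ℤ) (A : Finset ℕ) :
    mult d χ A ≠ 0 ∧ ∀ x ∈ satSub d χ A, mult d χ A • x ∈ latSub d χ A := by
  set K := satSub d χ A with hK
  set H := (latSub d χ A).addSubgroupOf K with hH
  haveI : AddGroup.FG ↥K := by
    have h : (AddSubgroup.toIntSubmodule K).FG := IsNoetherian.noetherian _
    have : Module.Finite ℤ ↥(AddSubgroup.toIntSubmodule K) := Module.Finite.iff_fg.mpr h
    exact Module.Finite.iff_addGroup_fg.mp this
  have htor : AddMonoid.IsTorsion (↥K ⧸ H) := by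
    intro g
    obtain ⟨y, rfl⟩ := QuotientAddGroup.mk'_surjective H g
    obtain ⟨N, hNne, hmem⟩ := exists_nsmul_mem_latSub d χ A y.1 y.2
    refine isOfFinAddOrder_iff_nsmul_eq_zero.mpr ⟨N, Nat.pos_of_ne_zero hNne, ?_⟩
    have hNy : N • y ∈ H := by
      rw [hH, AddSubgroup.mem_addSubgroupOf]
      simpa using hmem
    rw [← map_nsmul (QuotientAddGroup.mk' H)]
    exact (QuotientAddGroup.eq_zero_iff _).mpr hNy
  haveI : Finite (↥K ⧸ H) := AddCommGroup.finite_of_fg_torsion _ htor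
  haveI : H.FiniteIndex := ⟨AddSubgroup.index_ne_zero_of_finite⟩
  have hmult : mult d χ A = H.index := rfl
  constructor
  · rw [hmult]; exact AddSubgroup.index_ne_zero_of_finite
  · intro x hx
    have h := AddSubgroup.nsmul_index_mem H (⟨x, hx⟩ : K)
    rw [AddSubgroup.mem_addSubgroupOf] at h
    rw [hmult]
    simpa using h

/-- `Λ(E)` contains `ℤ^n`. -/
theorem stmt_11 (n k : ℕ) (hn : 1 ≤ n) (hk1 : 1 ≤ k) (hkn : k ≤ n)
    (χ : ℕ → Fin n → ℤ)
    (hbasis : LinearIndependent ℚ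
      (fun i : (Finset.Icc 1 n : Finset ℕ) => Qv n (χ i)))
    (hdep : ¬ LinearIndependent ℚ
      (fun i : (Finset.range (k+1) : Finset ℕ) => Qv n (χ i)))
    (hind : ∀ i ∈ Finset.range (k+1),
      LinearIndependent ℚ
        (fun a : (((Finset.range (k+1)).erase i : Finset ℕ) : Finset ℕ) => Qv n (χ a))) :
    ∀ v : Fin n → ℤ, Qv n v ∈ LamE n k χ := by
  set E : Finset ℕ := Finset.range (n+1) with hE
  -- the vectors over `E` span `ℚ^n`
  haveI : Nonempty ↥(Finset.Icc 1 n : Finset ℕ) := ⟨⟨1, by simp [Finset.mem_Icc, hn]⟩⟩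
  have hcard : Fintype.card ↥(Finset.Icc 1 n : Finset ℕ) = Module.finrank ℚ (Fin n → ℚ) := by
    simp [Nat.card_Icc]
  have h1 : Submodule.span ℚ
      (Set.range fun i : ↥(Finset.Icc 1 n : Finset ℕ) => Qv n (χ i)) = ⊤ :=
    hbasis.span_eq_top_of_card_eq_finrank hcard
  have hrange : (Set.range fun i : ↥(Finset.Icc 1 n : Finset ℕ) => Qv n (χ i)) =
      (fun i => Qv n (χ i)) '' ((Finset.Icc 1 n : Finset ℕ) : Set ℕ) := by
    ext x
    constructor
    · rintro ⟨⟨i, hi⟩, rfl⟩; exact ⟨i, hi, rfl⟩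
    · rintro ⟨i, hi, rfl⟩; exact ⟨⟨i, hi⟩, rfl⟩
  have hsubset : ((Finset.Icc 1 n : Finset ℕ) : Set ℕ) ⊆ ((E : Finset ℕ) : Set ℕ) := by
    intro i hi
    simp only [Finset.coe_Icc, Set.mem_Icc] at hi
    simp [hE, Finset.mem_range]
    omega
  have hspan : Submodule.span ℚ ((fun i => Qv n (χ i)) '' ((E : Finset ℕ) : Set ℕ)) = ⊤ := by
    apply top_unique
    rw [← h1, hrange]
    exact Submodule.span_mono (Set.image_mono hsubset)
  have hsat : satSub n χ E = ⊤ := by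
    rw [satSub, hspan]
    ext x
    simp
  set m : ℕ := mult n χ E with hm
  obtain ⟨hmne, hsmul⟩ := mult_spec n χ E
  intro v
  have hv : m • v ∈ latSub n χ E := hsmul v (by rw [hsat]; trivial)
  -- the comparison homomorphism `x ↦ (1/m) • Qv x`
  set φ : (Fin n → ℤ) →+ (Fin n → ℚ) :=
    (DistribMulAction.toAddMonoidHom (Fin n → ℚ) ((m : ℚ))⁻¹).comp (intCastHom n) with hφ
  have hle : latSub n χ E ≤ (LamE n k χ).toAddSubgroup.comap φ := by
    rw [latSub, AddSubgroup.closure_le]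
    rintro _ ⟨i, hi, rfl⟩
    have hiE : i ∈ ((E : Finset ℕ) : Set ℕ) := hi
    show φ (χ i) ∈ (LamE n k χ).toAddSubgroup
    set P : ℕ := if i ≤ k then
        ∏ j ∈ (Finset.range (k+1)).erase i, mult n χ ((Finset.range (k+1)).erase j)
      else 1 with hP
    have hPne : P ≠ 0 := by
      rw [hP]
      split
      · exact Finset.prod_ne_zero_iff.mpr fun j _ => (mult_spec n χ _).1
      · exact one_ne_zero
    have ha : aCoef n k χ i = m * P := by
      rw [aCoef, hP]
      split <;> simp [hm, hE]
    have hane : aCoef n k χ i ≠ 0 := by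
      rw [ha]; exact Nat.mul_ne_zero hmne hPne
    have hmem : ((aCoef n k χ i : ℚ))⁻¹ • Qv n (χ i) ∈ LamE n k χ :=
      Submodule.subset_span ⟨i, hiE, rfl⟩
    have h2 : (P : ℤ) • (((aCoef n k χ i : ℚ))⁻¹ • Qv n (χ i)) = (m : ℚ)⁻¹ • Qv n (χ i) := by
      rw [← Int.cast_smul_eq_zsmul ℚ, smul_smul]
      congr 1
      rw [ha]
      push_cast
      rw [mul_inv]
      have hmQ : (m : ℚ) ≠ 0 := Nat.cast_ne_zero.mpr hmne
      have hPQ : (P : ℚ) ≠ 0 := Nat.cast_ne_zero.mpr hPne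
      field_simp
    have : φ (χ i) = (m : ℚ)⁻¹ • Qv n (χ i) := rfl
    rw [this, ← h2]
    exact Submodule.smul_mem _ _ hmem
  have hφv : φ (m • v) ∈ (LamE n k χ).toAddSubgroup := hle hv
  have hfv : φ (m • v) = Qv n v := by
    funext j
    show (m : ℚ)⁻¹ * (((m • v) j : ℤ) : ℚ) = (v j : ℚ)
    have hmQ : (m : ℚ) ≠ 0 := Nat.cast_ne_zero.mpr hmne
    have : ((m • v) j : ℤ) = (m : ℤ) * v j := by simp [mul_comm]
    rw [this]
    push_cast
    field_simp
  rw [← hfv]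
  exact hφv
end
end
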